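/- arXiv:1810.03149 — 4 statements merged into one kernel-verified Lean document; each statement's English description precedes it below -/
import Mathlib

section
/- Let Q : ℝ≥0 → ℝ≥0 be a monotone increasing function. Then there exists a monotone increasing function Q₁ : ℝ≥0 → ℝ≥0, depending only on Q, such that for all L₁, L₂ ≥ 0 and all ε ∈ [0,1], one has Q(L₁ + ε·L₂) ≤ Q₁(L₁) + ε·Q₁(L₂). -/
/-- For any monotone increasing `Q : ℝ≥0 → ℝ≥0` there exists a monotone
increasing `Q₁ : ℝ≥0 → ℝ≥0`, depending only on `Q`, such that
`Q (L₁ + ε·L₂) ≤ Q₁ L₁ + ε·Q₁ L₂` for all `L₁, L₂ ≥ 0` and `ε ∈ [0,1]`. -/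
theorem quantified_splitting_of_monotone (Q : NNReal → NNReal) (hQ : Monotone Q) :
    ∃ Q₁ : NNReal → NNReal, Monotone Q₁ ∧
      ∀ (L₁ L₂ ε : NNReal), ε ≤ 1 → Q (L₁ + ε * L₂) ≤ Q₁ L₁ + ε * Q₁ L₂ := by
  refine ⟨fun L => (1 + L) * Q (2 * L + 1), ?_, ?_⟩
  · intro a b hab
    exact mul_le_mul' (by gcongr) (hQ (by gcongr))
  · intro L₁ L₂ ε hε
    rcases le_total L₂ L₁ with h | h
    · have h1 : L₁ + ε * L₂ ≤ 2 * L₁ + 1 := by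
        have : ε * L₂ ≤ L₁ := le_trans (by calc ε * L₂ ≤ 1 * L₂ := by gcongr
                                                _ = L₂ := one_mul _) h
        calc L₁ + ε * L₂ ≤ L₁ + L₁ := by gcongr
          _ = 2 * L₁ := (two_mul _).symm
          _ ≤ 2 * L₁ + 1 := le_self_add
      calc Q (L₁ + ε * L₂) ≤ Q (2 * L₁ + 1) := hQ h1
        _ ≤ (1 + L₁) * Q (2 * L₁ + 1) := le_mul_of_one_le_left' le_self_add
        _ ≤ (1 + L₁) * Q (2 * L₁ + 1) + ε * ((1 + L₂) * Q (2 * L₂ + 1)) := le_self_add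
    · rcases le_total 1 (ε * (1 + L₂)) with h2 | h2
      · have h1 : L₁ + ε * L₂ ≤ 2 * L₂ + 1 := by
          have : ε * L₂ ≤ L₂ := by calc ε * L₂ ≤ 1 * L₂ := by gcongr
                                        _ = L₂ := one_mul _
          calc L₁ + ε * L₂ ≤ L₂ + L₂ := by gcongr
            _ = 2 * L₂ := (two_mul _).symm
            _ ≤ 2 * L₂ + 1 := le_self_add
        calc Q (L₁ + ε * L₂) ≤ Q (2 * L₂ + 1) := hQ h1
          _ = 1 * Q (2 * L₂ + 1) := (one_mul _).symm
          _ ≤ ε * (1 + L₂) * Q (2 * L₂ + 1) := by gcongr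
          _ = ε * ((1 + L₂) * Q (2 * L₂ + 1)) := mul_assoc _ _ _
          _ ≤ (1 + L₁) * Q (2 * L₁ + 1) + ε * ((1 + L₂) * Q (2 * L₂ + 1)) :=
            le_add_self
      · have hε2 : ε * L₂ ≤ 1 := le_trans (by gcongr; exact le_add_self) h2
        have h1 : L₁ + ε * L₂ ≤ 2 * L₁ + 1 := by
          calc L₁ + ε * L₂ ≤ L₁ + 1 := by gcongr
            _ ≤ 2 * L₁ + 1 := by
              gcongr
              calc L₁ = 1 * L₁ := (one_mul _).symm
                _ ≤ 2 * L₁ := by gcongr; exact one_le_two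
        calc Q (L₁ + ε * L₂) ≤ Q (2 * L₁ + 1) := hQ h1
          _ ≤ (1 + L₁) * Q (2 * L₁ + 1) := le_mul_of_one_le_left' le_self_add
          _ ≤ (1 + L₁) * Q (2 * L₁ + 1) + ε * ((1 + L₂) * Q (2 * L₂ + 1)) := le_self_add
end

section
/- Let Y : [τ, ∞) → ℝ be continuous, C ≥ 0, δ' > 0, and l : [τ,∞) → ℝ≥0 locally integrable. If Y(t) ≤ C + ∫_τ^t e^{-δ'(t-s)} l(s) Y(s) ds for all t ≥ τ, then Y(t) ≤ C·(1 + ∫_τ^t e^{-δ'(t-s) + ∫_s^t l(κ)dκ} l(s) ds) for all t ≥ τ. -/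
/-!
Substituting `u s = e^{δ' s} Y s` and `α s = C e^{δ' s}` turns the hypothesis into the classical
integral Gronwall inequality `u ≤ α + ∫_τ^t l u`. There `R t = ∫_τ^t l u` is absolutely
continuous with `(R e^{-∫_τ l})' = l (u - R) e^{-∫_τ l} ≤ α l e^{-∫_τ l}` almost everywhere, and the
fundamental theorem of calculus for absolutely continuous functions bounds `R`.
-/

open MeasureTheory Set Filter

theorem LipschitzOnWith.comp_absolutelyContinuousOnInterval {X Y : Type*}
    [PseudoMetricSpace X] [PseudoMetricSpace Y] {g : X → Y} {K : NNReal} {s : Set X}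
    {f : ℝ → X} {a b : ℝ} (hg : LipschitzOnWith K g s) (hf : AbsolutelyContinuousOnInterval f a b)
    (hfs : MapsTo f (uIcc a b) s) :
    AbsolutelyContinuousOnInterval (g ∘ f) a b := by
  unfold AbsolutelyContinuousOnInterval at hf ⊢
  refine squeeze_zero' (Eventually.of_forall fun _ ↦ Finset.sum_nonneg fun _ _ ↦ dist_nonneg) ?_
    (by simpa using hf.const_mul (K : ℝ))
  rw [eventually_inf_principal]
  filter_upwards with ⟨n, I⟩ hI
  rw [Finset.mul_sum]
  gcongr with i hi
  exact hg.dist_le_mul _ (hfs (hI.1 i hi).1) _ (hfs (hI.1 i hi).2)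

theorem ContDiff.comp_absolutelyContinuousOnInterval {g f : ℝ → ℝ} {a b : ℝ}
    (hg : ContDiff ℝ 1 g) (hf : AbsolutelyContinuousOnInterval f a b) :
    AbsolutelyContinuousOnInterval (g ∘ f) a b := by
  obtain ⟨C, hC⟩ := hf.exists_bound
  obtain ⟨K, hK⟩ := hg.contDiffOn.exists_lipschitzOnWith one_ne_zero (convex_closedBall 0 C)
    (isCompact_closedBall 0 C)
  exact hK.comp_absolutelyContinuousOnInterval hf fun x hx ↦ mem_closedBall_zero_iff.2 (hC x hx)

theorem integral_mul_exp_neg_integral_le_of_le_add_integral {α β u : ℝ → ℝ} {a b : ℝ} (hab : a ≤ b)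
    (hβ : ∀ x ∈ Icc a b, 0 ≤ β x) (hβi : IntervalIntegrable β volume a b)
    (hα : ContinuousOn α (Icc a b)) (hu : ContinuousOn u (Icc a b))
    (h : ∀ x ∈ Icc a b, u x ≤ α x + ∫ s in a..x, β s * u s) :
    (∫ s in a..b, β s * u s) * Real.exp (-∫ s in a..b, β s)
      ≤ ∫ s in a..b, α s * β s * Real.exp (-∫ r in a..s, β r) := by
  rw [← uIcc_of_le hab] at hα hu
  set B := fun x ↦ ∫ s in a..x, β s
  set R := fun x ↦ ∫ s in a..x, β s * u s
  have hβu : IntervalIntegrable (fun s ↦ β s * u s) volume a b := hβi.mul_continuousOn hu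
  have hB : AbsolutelyContinuousOnInterval B a b :=
    hβi.absolutelyContinuousOnInterval_intervalIntegral left_mem_uIcc
  have hR : AbsolutelyContinuousOnInterval R a b :=
    hβu.absolutelyContinuousOnInterval_intervalIntegral left_mem_uIcc
  have hE : AbsolutelyContinuousOnInterval (fun x ↦ Real.exp (-B x)) a b :=
    (show ContDiff ℝ 1 fun y ↦ Real.exp (-y) by fun_prop).comp_absolutelyContinuousOnInterval hB
  have hRE := hR.fun_mul hE
  have hderiv : ∀ᵐ x ∂volume.restrict (Icc a b), deriv (fun x ↦ R x * Real.exp (-B x)) x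
      ≤ α x * β x * Real.exp (-B x) := by
    rw [ae_restrict_iff' measurableSet_Icc]
    filter_upwards [hβu.ae_hasDerivAt_integral, hβi.ae_hasDerivAt_integral] with x hRx hBx hx
    have hx' : x ∈ uIcc a b := uIcc_of_le hab ▸ hx
    have hd : HasDerivAt (fun x ↦ R x * Real.exp (-B x))
        (β x * u x * Real.exp (-B x) + R x * (Real.exp (-B x) * -β x)) x :=
      (hRx hx' a left_mem_uIcc).mul (hBx hx' a left_mem_uIcc).neg.exp
    rw [hd.deriv]
    have := mul_le_mul_of_nonneg_left (h x hx) (mul_nonneg (hβ x hx) (Real.exp_pos (-B x)).le)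
    linarith
  have hαβE : IntervalIntegrable (fun x ↦ α x * β x * Real.exp (-B x)) volume a b :=
    (hβi.continuousOn_mul hα).mul_continuousOn hE.continuousOn
  calc (∫ s in a..b, β s * u s) * Real.exp (-∫ s in a..b, β s)
      = ∫ x in a..b, deriv (fun x ↦ R x * Real.exp (-B x)) x := by
        rw [hRE.integral_deriv_eq_sub]; simp [R, B]
    _ ≤ _ := intervalIntegral.integral_mono_ae_restrict hab hRE.intervalIntegrable_deriv hαβE hderiv

theorem le_add_integral_mul_exp_integral_of_le_add_integral {α β u : ℝ → ℝ} {a b : ℝ}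
    (hab : a ≤ b) (hβ : ∀ x ∈ Icc a b, 0 ≤ β x) (hβi : IntervalIntegrable β volume a b)
    (hα : ContinuousOn α (Icc a b)) (hu : ContinuousOn u (Icc a b))
    (h : ∀ x ∈ Icc a b, u x ≤ α x + ∫ s in a..x, β s * u s) :
    u b ≤ α b + ∫ s in a..b, α s * β s * Real.exp (∫ r in s..b, β r) := by
  have hsplit : ∫ s in a..b, α s * β s * Real.exp (∫ r in s..b, β r)
      = Real.exp (∫ s in a..b, β s) * ∫ s in a..b, α s * β s * Real.exp (-∫ r in a..s, β r) := by
    rw [← intervalIntegral.integral_const_mul]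
    refine intervalIntegral.integral_congr fun s hs ↦ ?_
    have hsub : ∫ r in s..b, β r = (∫ r in a..b, β r) - ∫ r in a..s, β r :=
      (intervalIntegral.integral_interval_sub_left hβi
        (hβi.mono_set (uIcc_subset_uIcc_left hs))).symm
    simp only [hsub, sub_eq_add_neg, Real.exp_add]
    ring
  have hR := integral_mul_exp_neg_integral_le_of_le_add_integral hab hβ hβi hα hu h
  rw [← le_div_iff₀ (Real.exp_pos _), div_eq_mul_inv, ← Real.exp_neg, neg_neg, mul_comm] at hR
  linarith [h b (right_mem_Icc.2 hab)]

theorem exp_mul_integral_exp_neg_mul_sub_mul (c a t : ℝ) (f : ℝ → ℝ) :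
    Real.exp (c * t) * ∫ s in a..t, Real.exp (-c * (t - s)) * f s
      = ∫ s in a..t, Real.exp (c * s) * f s := by
  rw [← intervalIntegral.integral_const_mul]
  congr 1 with s
  rw [← mul_assoc, ← Real.exp_add]
  ring_nf

theorem gronwall_exponential_kernel_general (τ C δ' : ℝ)
    (Y : ℝ → ℝ) (hY : ContinuousOn Y (Set.Ici τ))
    (l : ℝ → ℝ) (hl : ∀ t, 0 ≤ l t) (hlint : LocallyIntegrableOn l (Set.Ici τ))
    (hineq : ∀ t, τ ≤ t →
      Y t ≤ C + ∫ s in τ..t, Real.exp (-δ' * (t - s)) * l s * Y s) :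
    ∀ t, τ ≤ t →
      Y t ≤ C * (1 + ∫ s in τ..t, Real.exp (-δ' * (t - s) + ∫ κ in s..t, l κ) * l s) := by
  intro t ht
  have hli : IntervalIntegrable l volume τ t := (intervalIntegrable_iff_integrableOn_Icc_of_le ht).2
    (hlint.integrableOn_compact_subset Icc_subset_Ici_self isCompact_Icc)
  have hexp : ContinuousOn (fun s ↦ Real.exp (δ' * s)) (Icc τ t) := by fun_prop
  have hgron := le_add_integral_mul_exp_integral_of_le_add_integral
    (α := fun s ↦ C * Real.exp (δ' * s)) (u := fun s ↦ Real.exp (δ' * s) * Y s)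
    ht (fun x _ ↦ hl x) hli (continuousOn_const.mul hexp)
    (hexp.mul (hY.mono Icc_subset_Ici_self)) fun x hx ↦ by
      refine (mul_le_mul_of_nonneg_left (hineq x hx.1) (Real.exp_pos (δ' * x)).le).trans_eq ?_
      simp only [mul_add, mul_assoc, exp_mul_integral_exp_neg_mul_sub_mul]
      rw [mul_comm _ C]
      congr 1
      exact intervalIntegral.integral_congr fun s _ ↦ mul_left_comm _ _ _
  refine le_of_mul_le_mul_left (hgron.trans_eq ?_) (Real.exp_pos (δ' * t))
  simp only [Real.exp_add, mul_add, mul_assoc]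
  rw [mul_left_comm _ C (intervalIntegral _ _ _ _), exp_mul_integral_exp_neg_mul_sub_mul,
    ← intervalIntegral.integral_const_mul]
  congr 1
  · ring
  · exact intervalIntegral.integral_congr fun s _ ↦ by ring

/-- A Gronwall-type lemma with exponentially decaying kernel: if `Y` is
continuous on `[τ,∞)`, `C ≥ 0`, `δ' > 0`, `l ≥ 0` is locally integrable on `[τ,∞)` and
`Y t ≤ C + ∫_τ^t e^{-δ'(t-s)} l(s) Y(s) ds` for all `t ≥ τ`, then
`Y t ≤ C (1 + ∫_τ^t e^{-δ'(t-s) + ∫_s^t l(κ)dκ} l(s) ds)` for all `t ≥ τ`. -/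
theorem gronwall_exponential_kernel (τ C δ' : ℝ) (hC : 0 ≤ C) (hδ : 0 < δ')
    (Y : ℝ → ℝ) (hY : ContinuousOn Y (Set.Ici τ))
    (l : ℝ → ℝ) (hl : ∀ t, 0 ≤ l t) (hlint : LocallyIntegrableOn l (Set.Ici τ))
    (hineq : ∀ t, τ ≤ t →
      Y t ≤ C + ∫ s in τ..t, Real.exp (-δ' * (t - s)) * l s * Y s) :
    ∀ t, τ ≤ t →
      Y t ≤ C * (1 + ∫ s in τ..t, Real.exp (-δ' * (t - s) + ∫ κ in s..t, l κ) * l s) :=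
  gronwall_exponential_kernel_general τ C δ' Y hY l hl hlint hineq
end

section
/- Let μₙ be a sequence of finite signed Borel measures on [a,b] converging weakly-star (in the dual of C[a,b]) to a signed measure μ, with sup_n ‖μₙ‖ < ∞. Then every subsequence of the distribution functions Φₙ(t) := μₙ([a,t)) contains a further subsequence converging to Φ_μ(t) := μ([a,t)) at every point of [a,b] outside some countable set (depending on the subsequence). -/
open MeasureTheory Filter Topology
open scoped ENNReal

/-- Lebesgue integral of `g` against a finite signed measure, via the Jordan decomposition. -/
noncomputable def sintegral (s : SignedMeasure ℝ) (g : ℝ → ℝ) : ℝ :=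
  (∫ t, g t ∂s.toJordanDecomposition.posPart) - ∫ t, g t ∂s.toJordanDecomposition.negPart

/-!
Since every `μₙ` lives on `[a, b]`, `μₙ([a,t)) = μₙ(-∞,t)`. By Helly's selection theorem the
monotone, uniformly bounded functions `Fₙ(t) = |μₙ|(-∞,t)` have a subsequence converging to a
monotone `G` at every continuity point of `G`. Let `t` be a continuity point of `G` and of
`t ↦ |μ|(-∞,t)`; these are all but countably many points. For `p < t`, the continuous ramp
`fₚ` equal to `1` on `(-∞,p]` and to `0` on `[t,∞)` satisfies
`|ν(-∞,t) - ∫ fₚ dν| ≤ |ν|[p,t)` for every signed measure `ν`. Hence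
`limsup |μₙ(-∞,t) - μ(-∞,t)| ≤ (G t - G p) + (|μ|(-∞,t) - |μ|(-∞,p))`, which tends to `0`
as `p ↑ t` through continuity points of `G`.
-/

open Set

section Helly

theorem exists_tendsto_subseq_of_bounded {ι : Type*} [Countable ι] (f : ℕ → ι → ℝ)
    (hf : ∀ i, ∃ C, ∀ n, |f n i| ≤ C) :
    ∃ (L : ι → ℝ) (ψ : ℕ → ℕ), StrictMono ψ ∧
      ∀ i, Tendsto (fun n => f (ψ n) i) atTop (𝓝 (L i)) := by
  choose C hC using hf
  obtain ⟨L, -, ψ, hψ, hlim⟩ := (isCompact_univ_pi fun i => isCompact_Icc).tendsto_subseq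
    (s := univ.pi fun i => Icc (-C i) (C i)) (x := f)
    fun n => mem_univ_pi.2 fun i => abs_le.1 (hC i n)
  exact ⟨L, ψ, hψ, fun i => tendsto_pi_nhds.1 hlim i⟩

/-- The right-continuous function on `ℝ` determined by the values of `L` at rationals. -/
noncomputable def ratRightLim (L : ℚ → ℝ) (t : ℝ) : ℝ :=
  ⨅ q : {q : ℚ // t < q}, L q

variable {L : ℚ → ℝ}

theorem ratRightLim_le (hL : Monotone L) {t : ℝ} {q : ℚ} (hq : t < q) :
    ratRightLim L t ≤ L q := by
  obtain ⟨r, hr⟩ := exists_rat_lt t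
  refine ciInf_le ⟨L r, ?_⟩ (⟨q, hq⟩ : {q : ℚ // t < q})
  rintro _ ⟨q', rfl⟩
  exact hL (Rat.cast_lt.1 (hr.trans q'.2)).le

theorem le_ratRightLim (hL : Monotone L) {t : ℝ} {q : ℚ} (hq : (q : ℝ) < t) :
    L q ≤ ratRightLim L t := by
  have : Nonempty {q : ℚ // t < q} := nonempty_subtype.2 (exists_rat_gt t)
  exact le_ciInf fun r => hL (Rat.cast_lt.1 (hq.trans r.2)).le

theorem monotone_ratRightLim (hL : Monotone L) : Monotone (ratRightLim L) := by
  intro t t' htt'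
  have : Nonempty {q : ℚ // t' < q} := nonempty_subtype.2 (exists_rat_gt t')
  exact le_ciInf fun q => ratRightLim_le hL (htt'.trans_lt q.2)

theorem tendsto_ratRightLim_of_continuousAt (hLmono : Monotone L) {F : ℕ → ℝ → ℝ}
    (hF : ∀ n, Monotone (F n)) (hL : ∀ q : ℚ, Tendsto (fun n => F n q) atTop (𝓝 (L q)))
    {t : ℝ} (ht : ContinuousAt (ratRightLim L) t) :
    Tendsto (fun n => F n t) atTop (𝓝 (ratRightLim L t)) := by
  refine tendsto_order.2 ⟨fun c hc => ?_, fun c hc => ?_⟩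
  · obtain ⟨s, hst, hcs⟩ := (ht.eventually (lt_mem_nhds hc)).exists_lt
    obtain ⟨q, hsq, hqt⟩ := exists_rat_btwn hst
    filter_upwards [(hL q).eventually (lt_mem_nhds (hcs.trans_le (ratRightLim_le hLmono hsq)))]
      with n hn
    exact hn.trans_le (hF n hqt.le)
  · obtain ⟨s, hts, hsc⟩ := (ht.eventually (gt_mem_nhds hc)).exists_gt
    obtain ⟨q, htq, hqs⟩ := exists_rat_btwn hts
    filter_upwards [(hL q).eventually (gt_mem_nhds ((le_ratRightLim hLmono hqs).trans_lt hsc))]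
      with n hn
    exact (hF n htq.le).trans_lt hn

/-- Helly's selection theorem. -/
theorem exists_monotone_tendsto_subseq {F : ℕ → ℝ → ℝ} (hF : ∀ n, Monotone (F n))
    (hbdd : ∀ x, ∃ C, ∀ n, |F n x| ≤ C) :
    ∃ (ψ : ℕ → ℕ) (G : ℝ → ℝ), StrictMono ψ ∧ Monotone G ∧
      ∀ t, ContinuousAt G t → Tendsto (fun n => F (ψ n) t) atTop (𝓝 (G t)) := by
  obtain ⟨L, ψ, hψ, hL⟩ :=
    exists_tendsto_subseq_of_bounded (fun n (q : ℚ) => F n q) fun q => hbdd q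
  have hLmono : Monotone L := fun p q hpq =>
    le_of_tendsto_of_tendsto' (hL p) (hL q) fun n => hF _ (by exact_mod_cast hpq)
  exact ⟨ψ, ratRightLim L, hψ, monotone_ratRightLim hLmono,
    fun t ht => tendsto_ratRightLim_of_continuousAt hLmono (fun n => hF (ψ n)) hL ht⟩

end Helly

section Ramp

noncomputable def ramp (p t x : ℝ) : ℝ := min 1 (max 0 ((t - x) / (t - p)))

variable {p t : ℝ}

theorem continuous_ramp (p t : ℝ) : Continuous (ramp p t) := by
  unfold ramp
  fun_prop

theorem ramp_nonneg (p t x : ℝ) : 0 ≤ ramp p t x :=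
  le_min zero_le_one (le_max_left _ _)

theorem abs_ramp_le_one (p t x : ℝ) : |ramp p t x| ≤ 1 :=
  abs_le.2 ⟨(neg_nonpos.2 zero_le_one).trans (ramp_nonneg p t x), min_le_left _ _⟩

theorem indicator_Iic_le_ramp (hpt : p < t) (x : ℝ) : (Iic p).indicator 1 x ≤ ramp p t x := by
  rcases le_or_gt x p with hx | hx
  · rw [indicator_of_mem (mem_Iic.2 hx), Pi.one_apply, ramp, le_min_iff, le_max_iff,
      one_le_div (by linarith)]
    exact ⟨le_rfl, Or.inr (by linarith)⟩
  · rw [indicator_of_notMem (notMem_Iic.2 hx)]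
    exact ramp_nonneg p t x

theorem ramp_le_indicator_Iio (hpt : p ≤ t) (x : ℝ) : ramp p t x ≤ (Iio t).indicator 1 x := by
  rcases lt_or_ge x t with hx | hx
  · rw [indicator_of_mem (mem_Iio.2 hx)]
    exact min_le_left _ _
  · rw [indicator_of_notMem (notMem_Iio.2 hx), ramp,
      max_eq_left (div_nonpos_of_nonpos_of_nonneg (by linarith) (by linarith))]
    exact min_le_right _ _

theorem abs_measureReal_Iio_sub_integral_ramp_le (ρ : Measure ℝ) [IsFiniteMeasure ρ]
    (hpt : p < t) :
    |ρ.real (Iio t) - ∫ x, ramp p t x ∂ρ| ≤ ρ.real (Iio t) - ρ.real (Iio p) := by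
  have hint : Integrable (ramp p t) ρ :=
    (integrable_const 1).mono' (continuous_ramp p t).aestronglyMeasurable
      (ae_of_all _ (abs_ramp_le_one p t))
  have hlower : ρ.real (Iic p) ≤ ∫ x, ramp p t x ∂ρ := by
    rw [← integral_indicator_one measurableSet_Iic]
    exact integral_mono ((integrable_const 1).indicator measurableSet_Iic) hint
      (indicator_Iic_le_ramp hpt)
  have hupper : ∫ x, ramp p t x ∂ρ ≤ ρ.real (Iio t) := by
    rw [← integral_indicator_one measurableSet_Iio]
    exact integral_mono hint ((integrable_const 1).indicator measurableSet_Iio)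
      (ramp_le_indicator_Iio hpt.le)
  have hIio_le_Iic : ρ.real (Iio p) ≤ ρ.real (Iic p) := measureReal_mono Iio_subset_Iic_self
  rw [abs_of_nonneg (by linarith)]
  linarith

theorem abs_apply_Iio_sub_sintegral_ramp_le (s : SignedMeasure ℝ) (hpt : p < t) :
    |s (Iio t) - sintegral s (ramp p t)| ≤
      s.totalVariation.real (Iio t) - s.totalVariation.real (Iio p) := by
  have hP := abs_measureReal_Iio_sub_integral_ramp_le s.toJordanDecomposition.posPart hpt
  have hN := abs_measureReal_Iio_sub_integral_ramp_le s.toJordanDecomposition.negPart hpt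
  rw [s.apply_eq_posPart_real_sub_negPart_real measurableSet_Iio, sintegral,
    SignedMeasure.totalVariation, measureReal_add_apply, measureReal_add_apply]
  rw [abs_le] at hP hN ⊢
  constructor <;> linarith

end Ramp

theorem monotone_measureReal_Iio (ρ : Measure ℝ) [IsFiniteMeasure ρ] :
    Monotone fun x => ρ.real (Iio x) :=
  fun _ _ h => measureReal_mono (Iio_subset_Iio h)

theorem Filter.Eventually.exists_lt_notMem_of_countable {P : ℝ → Prop} {t : ℝ}
    (hP : ∀ᶠ x in 𝓝 t, P x) {S : Set ℝ} (hS : S.Countable) : ∃ p < t, p ∉ S ∧ P p := by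
  obtain ⟨l, hlt, hsub⟩ := mem_nhdsLT_iff_exists_Ioo_subset.1 (nhdsWithin_le_nhds hP)
  obtain ⟨p, hpS, hlp, hpt⟩ := (hS.dense_compl ℝ).exists_between hlt
  exact ⟨p, hpt, hpS, hsub ⟨hlp, hpt⟩⟩

theorem tendsto_apply_Iio_of_tendsto_sintegral {s : ℕ → SignedMeasure ℝ} {ν : SignedMeasure ℝ}
    {G : ℝ → ℝ} (hG : Monotone G)
    (hsG : ∀ x, ContinuousAt G x →
      Tendsto (fun n => (s n).totalVariation.real (Iio x)) atTop (𝓝 (G x)))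
    (hconv : ∀ f : ℝ → ℝ, Continuous f →
      Tendsto (fun n => sintegral (s n) f) atTop (𝓝 (sintegral ν f)))
    {t : ℝ} (htG : ContinuousAt G t)
    (htν : ContinuousAt (fun x => ν.totalVariation.real (Iio x)) t) :
    Tendsto (fun n => s n (Iio t)) atTop (𝓝 (ν (Iio t))) := by
  set H := fun x => ν.totalVariation.real (Iio x)
  have hE : Tendsto (fun x => (G t - G x) + (H t - H x)) (𝓝 t) (𝓝 0) := by
    simpa using ((tendsto_const_nhds (x := G t)).sub htG.tendsto).add
      ((tendsto_const_nhds (x := H t)).sub htν.tendsto)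
  refine Metric.tendsto_nhds.2 fun ε hε => ?_
  -- `p` is taken to be a continuity point of `G`, so that `|sₙ|(-∞,p) → G p`.
  obtain ⟨p, hpt, hpG, hpε⟩ :=
    (hE.eventually (gt_mem_nhds hε)).exists_lt_notMem_of_countable hG.countable_not_continuousAt
  have hw : Tendsto (fun n =>
      ((s n).totalVariation.real (Iio t) - (s n).totalVariation.real (Iio p))
      + dist (sintegral (s n) (ramp p t)) (sintegral ν (ramp p t)) + (H t - H p)) atTop
      (𝓝 ((G t - G p) + 0 + (H t - H p))) :=
    (((hsG t htG).sub (hsG p (not_not.1 hpG))).add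
      (tendsto_iff_dist_tendsto_zero.1 (hconv _ (continuous_ramp p t)))).add_const _
  have hlim_lt : G t - G p + 0 + (H t - H p) < ε := by linarith
  filter_upwards [hw.eventually (gt_mem_nhds hlim_lt)] with n hn
  calc dist (s n (Iio t)) (ν (Iio t))
      ≤ dist (s n (Iio t)) (sintegral (s n) (ramp p t))
        + dist (sintegral (s n) (ramp p t)) (sintegral ν (ramp p t))
        + dist (sintegral ν (ramp p t)) (ν (Iio t)) := dist_triangle4 _ _ _ _
    _ ≤ ((s n).totalVariation.real (Iio t) - (s n).totalVariation.real (Iio p))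
        + dist (sintegral (s n) (ramp p t)) (sintegral ν (ramp p t)) + (H t - H p) := by
      rw [Real.dist_eq, Real.dist_eq (sintegral ν _), abs_sub_comm (sintegral ν _)]
      gcongr
      · exact abs_apply_Iio_sub_sintegral_ramp_le _ hpt
      · exact abs_apply_Iio_sub_sintegral_ramp_le _ hpt
    _ < ε := hn

namespace MeasureTheory.SignedMeasure

theorem apply_Ico_eq_apply_Iio {s : SignedMeasure ℝ} {a t : ℝ}
    (hs : s (Iio a) = 0) (hat : a ≤ t) : s (Ico a t) = s (Iio t) := by
  rw [← Iio_union_Ico_eq_Iio hat, VectorMeasure.of_union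
    ((Iio_disjoint_Ici le_rfl).mono_right Ico_subset_Ici_self) measurableSet_Iio
    measurableSet_Ico, hs, zero_add]

theorem totalVariation_le_of_forall_apply_eq_zero {α : Type*} [MeasurableSpace α]
    {s : SignedMeasure α} {K : Set α} (hK : MeasurableSet K)
    (hs : ∀ A : Set α, MeasurableSet A → A ∩ K = ∅ → s A = 0) (A : Set α) :
    s.totalVariation A ≤ s.totalVariation K := by
  have hKc : s.totalVariation Kᶜ = 0 := by
    rw [s.totalVariation_eq_variation, VectorMeasure.variation_apply_eq_zero hK.compl]
    exact fun B hB hBm =>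
      hs B hBm (disjoint_iff_inter_eq_empty.1 (subset_compl_iff_disjoint_right.1 hB))
  exact measure_mono_ae (ae_le_set.2 (measure_mono_null (fun x hx => hx.2) hKc))

end MeasureTheory.SignedMeasure

theorem helly_selection_signed_measures_general
    (a b : ℝ)
    (μn : ℕ → SignedMeasure ℝ) (μ : SignedMeasure ℝ)
    (hsupp : ∀ n, ∀ A : Set ℝ, MeasurableSet A → A ∩ Set.Icc a b = ∅ → μn n A = 0)
    (hsuppμ : ∀ A : Set ℝ, MeasurableSet A → A ∩ Set.Icc a b = ∅ → μ A = 0)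
    (hbdd : ∃ C : ℝ≥0∞, C ≠ ⊤ ∧ ∀ n, (μn n).totalVariation (Set.Icc a b) ≤ C)
    (hconv : ∀ f : ℝ → ℝ, Continuous f →
      Tendsto (fun n => sintegral (μn n) f) atTop (𝓝 (sintegral μ f))) :
    ∀ φ : ℕ → ℕ, StrictMono φ →
      ∃ (ψ : ℕ → ℕ) (S : Set ℝ), StrictMono ψ ∧ S.Countable ∧
        ∀ t ∈ Set.Icc a b, t ∉ S →
          Tendsto (fun m => μn (φ (ψ m)) (Set.Ico a t)) atTop (𝓝 (μ (Set.Ico a t))) := by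
  intro φ hφ
  obtain ⟨C, hC, hCb⟩ := hbdd
  have hIio : Iio a ∩ Icc a b = ∅ :=
    disjoint_iff_inter_eq_empty.1 ((Iio_disjoint_Ici le_rfl).mono_right Icc_subset_Ici_self)
  have hF : ∀ x, ∃ C', ∀ m, |(μn (φ m)).totalVariation.real (Iio x)| ≤ C' := fun x =>
    ⟨C.toReal, fun m => (abs_of_nonneg measureReal_nonneg).trans_le <| ENNReal.toReal_mono hC <|
      ((μn _).totalVariation_le_of_forall_apply_eq_zero measurableSet_Icc (hsupp _) _).trans
        (hCb _)⟩
  obtain ⟨ψ, G, hψ, hG, hlim⟩ := exists_monotone_tendsto_subseq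
    (fun m => monotone_measureReal_Iio (μn (φ m)).totalVariation) hF
  refine ⟨ψ, {t | ¬ContinuousAt G t} ∪
      {t | ¬ContinuousAt (fun x => μ.totalVariation.real (Iio x)) t}, hψ,
    hG.countable_not_continuousAt.union
      (monotone_measureReal_Iio _).countable_not_continuousAt, fun t ht htS => ?_⟩
  simp only [mem_union, mem_ofPred_eq, not_or, not_not] at htS
  simp only [(μn _).apply_Ico_eq_apply_Iio (hsupp _ _ measurableSet_Iio hIio) ht.1,
    μ.apply_Ico_eq_apply_Iio (hsuppμ _ measurableSet_Iio hIio) ht.1]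
  exact tendsto_apply_Iio_of_tendsto_sintegral hG hlim
    (fun f hf => (hconv f hf).comp (hφ.comp hψ).tendsto_atTop) htS.1 htS.2

/-- (Helly-type selection theorem.) Let `μₙ` be finite signed Borel measures
on `[a,b]` converging weakly-star (in the duality with `C[a,b]`) to `μ`, with
`sup_n ‖μₙ‖ < ∞`. Then every subsequence of the distribution functions `t ↦ μₙ([a,t))`
contains a further subsequence converging to `t ↦ μ([a,t))` at every point of `[a,b]`
outside some countable set (depending on the subsequence). -/
theorem helly_selection_signed_measures
    (a b : ℝ) (hab : a ≤ b)
    (μn : ℕ → SignedMeasure ℝ) (μ : SignedMeasure ℝ)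
    (hsupp : ∀ n, ∀ A : Set ℝ, MeasurableSet A → A ∩ Set.Icc a b = ∅ → μn n A = 0)
    (hsuppμ : ∀ A : Set ℝ, MeasurableSet A → A ∩ Set.Icc a b = ∅ → μ A = 0)
    (hbdd : ∃ C : ℝ≥0∞, C ≠ ⊤ ∧ ∀ n, (μn n).totalVariation (Set.Icc a b) ≤ C)
    (hconv : ∀ f : ℝ → ℝ, Continuous f →
      Tendsto (fun n => sintegral (μn n) f) atTop (𝓝 (sintegral μ f))) :
    ∀ φ : ℕ → ℕ, StrictMono φ →
      ∃ (ψ : ℕ → ℕ) (S : Set ℝ), StrictMono ψ ∧ S.Countable ∧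
        ∀ t ∈ Set.Icc a b, t ∉ S →
          Tendsto (fun m => μn (φ (ψ m)) (Set.Ico a t)) atTop (𝓝 (μ (Set.Ico a t))) :=
  helly_selection_signed_measures_general a b μn μ hsupp hsuppμ hbdd hconv
end

section
/- Let H be a separable Hilbert space, ω : ℝ≥0 → ℝ≥0 monotone increasing continuous with ω(0+) = 0, and let μₙ ∈ M(a,b;H) be a weakly-star convergent sequence with limit μ, such that |μₙ|([x,y]) ≤ ω(|x−y|) for all n and all x ≤ y in [a,b]. Then the limit measure μ is non-atomic, its distribution function satisfies ‖Φ_μ(x) − Φ_μ(y)‖_H ≤ ω(|x−y|), and for every ψ ∈ H the scalar functions t ↦ (Φ_{μₙ}(t), ψ) converge to t ↦ (Φ_μ(t), ψ) uniformly on [a,b]. -/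
open MeasureTheory Filter Topology
open scoped ENNReal NNReal

/-- Total variation of an `H`-valued vector measure on a set `A`. -/
noncomputable def tvar {H : Type*} [NormedAddCommGroup H]
    (μ : VectorMeasure ℝ H) (A : Set ℝ) : ℝ≥0∞ :=
  ⨆ (P : ℕ → Set ℝ) (_ : ∀ n, MeasurableSet (P n))
    (_ : ∀ m n, m ≠ n → Disjoint (P m) (P n)) (_ : ∀ n, P n ⊆ A),
      ∑' n, (‖μ (P n)‖₊ : ℝ≥0∞)

/-- The scalar signed measure `A ↦ ⟪ψ, μ(A)⟫` associated with a vector measure `μ`. -/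
noncomputable def scalarComp {H : Type*} [NormedAddCommGroup H] [InnerProductSpace ℝ H]
    (μ : VectorMeasure ℝ H) (ψ : H) : SignedMeasure ℝ :=
  μ.mapRange (innerSL ℝ ψ).toLinearMap.toAddMonoidHom (innerSL ℝ ψ).continuous

/-- The pairing `∫ (f(t), μ(dt))_H` of an `H`-valued function with an `H`-valued vector
measure, computed through an orthonormal Hilbert basis `b` of `H`. -/
noncomputable def vpair {H : Type*} [NormedAddCommGroup H] [InnerProductSpace ℝ H]
    (b : HilbertBasis ℕ ℝ H) (μ : VectorMeasure ℝ H) (f : ℝ → H) : ℝ :=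
  ∑' i, sintegral (scalarComp μ (b i)) fun t => (inner ℝ (f t) (b i) : ℝ)

/-!
Testing `μₙ ⇀ μ` against `φ • ψ`, where `φ` is a continuous trapezoid equal to `1` on `[x, y]`
and vanishing off `[x - δ, y + δ]`, recovers `⟪ψ, μₙ[x, y]⟫` up to `2‖ψ‖ω(δ)` uniformly in `n`,
and `⟪ψ, μ[x, y]⟫` up to `|⟪ψ, μ⟫|([x - δ, y + δ] \ [x, y])`, which tends to `0` with `δ`.
Hence `μₙ[x, y] ⇀ μ[x, y]` on every closed interval: first for `ψ` in the span of the basis,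
where `vpair` reduces to the scalar integral against `⟪ψ, μ⟫`, then for all `ψ` because
`‖μₙ[x, y]‖ ≤ ω(y - x)`. Weak lower semicontinuity of the norm gives `‖μ[x, y]‖ ≤ ω(y - x)`;
so `μ` has no atoms, `Φ_μ(y) - Φ_μ(x) = μ[x, y]`, and the functions `t ↦ ⟪Φ_{μₙ}(t), ψ⟫` are
equicontinuous with modulus `‖ψ‖ω` and converge pointwise, hence uniformly on the compact
`[a, b]` (Arzelà–Ascoli).
-/

open Set
open scoped BoundedContinuousFunction

section TotalVariation

variable {H : Type*} [NormedAddCommGroup H] (ν : VectorMeasure ℝ H)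

theorem tsum_nnnorm_le_tvar {A : Set ℝ} (P : ℕ → Set ℝ) (hm : ∀ n, MeasurableSet (P n))
    (hd : ∀ m n, m ≠ n → Disjoint (P m) (P n)) (hA : ∀ n, P n ⊆ A) :
    ∑' n, (‖ν (P n)‖₊ : ℝ≥0∞) ≤ tvar ν A :=
  le_iSup_of_le P <| le_iSup_of_le hm <| le_iSup_of_le hd <| le_iSup_of_le hA le_rfl

theorem tvar_empty : tvar ν ∅ = 0 :=
  nonpos_iff_eq_zero.1 <| iSup_le fun P => iSup_le fun _ => iSup_le fun _ => iSup_le fun hP => by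
    simp [subset_empty_iff.1 (hP _)]

theorem nnnorm_add_nnnorm_le_tvar {A B C : Set ℝ} (hB : MeasurableSet B) (hC : MeasurableSet C)
    (hBC : Disjoint B C) (hBA : B ⊆ A) (hCA : C ⊆ A) :
    (‖ν B‖₊ : ℝ≥0∞) + ‖ν C‖₊ ≤ tvar ν A := by
  classical
  let P : ℕ → Set ℝ := fun k => if k = 0 then B else if k = 1 then C else ∅
  have hPm : ∀ n, MeasurableSet (P n) := by
    intro n; dsimp only [P]; split_ifs <;> simp [hB, hC]
  have hPd : ∀ m n, m ≠ n → Disjoint (P m) (P n) := by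
    intro m n hmn; dsimp only [P]
    split_ifs <;> first | (exfalso; omega) | exact hBC | exact hBC.symm | simp
  have hPA : ∀ n, P n ⊆ A := by
    intro n; dsimp only [P]; split_ifs <;> simp [hBA, hCA]
  calc (‖ν B‖₊ : ℝ≥0∞) + ‖ν C‖₊ = ∑ k ∈ Finset.range 2, (‖ν (P k)‖₊ : ℝ≥0∞) := by
        simp [P, Finset.sum_range_succ]
    _ ≤ ∑' k, (‖ν (P k)‖₊ : ℝ≥0∞) := ENNReal.sum_le_tsum _
    _ ≤ tvar ν A := tsum_nnnorm_le_tvar ν P hPm hPd hPA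

theorem nnnorm_le_tvar {A B : Set ℝ} (hB : MeasurableSet B) (hBA : B ⊆ A) :
    (‖ν B‖₊ : ℝ≥0∞) ≤ tvar ν A := by
  simpa using nnnorm_add_nnnorm_le_tvar ν hB .empty (disjoint_empty B) hBA (empty_subset A)

theorem tvar_le_tvar_inter {S : Set ℝ} (hS : MeasurableSet S)
    (hν : ∀ B, MeasurableSet B → B ∩ S = ∅ → ν B = 0) (A : Set ℝ) :
    tvar ν A ≤ tvar ν (A ∩ S) := by
  refine iSup_le fun P => iSup_le fun hP => iSup_le fun hd => iSup_le fun hPA => ?_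
  have hPS : ∀ n, ν (P n) = ν (P n ∩ S) := fun n => by
    rw [← VectorMeasure.of_add_of_sdiff ((hP n).inter hS) (hP n) inter_subset_left,
      sdiff_self_inter, hν _ ((hP n).diff hS) sdiff_inter_self, add_zero]
  simp_rw [hPS]
  exact tsum_nnnorm_le_tvar ν _ (fun n => (hP n).inter hS)
    (fun m n h => (hd m n h).mono inter_subset_left inter_subset_left)
    (fun n => inter_subset_inter_left S (hPA n))

/-- Strong uniform non-atomicity with modulus `ω`. -/
def HasVariationModulus (ω : ℝ≥0 → ℝ≥0) : Prop :=
  ∀ x y, tvar ν (Icc x y) ≤ ω (y - x).toNNReal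

variable {ν}

theorem HasVariationModulus.of_support {ω : ℝ≥0 → ℝ≥0} (hω : Monotone ω) {a b : ℝ}
    (hsupp : ∀ A : Set ℝ, MeasurableSet A → A ∩ Icc a b = ∅ → ν A = 0)
    (hν : ∀ x ∈ Icc a b, ∀ y ∈ Icc a b, x ≤ y → tvar ν (Icc x y) ≤ ω (y - x).toNNReal) :
    HasVariationModulus ν ω := by
  intro x y
  refine (tvar_le_tvar_inter ν measurableSet_Icc hsupp _).trans ?_
  rw [Icc_inter_Icc]
  rcases le_or_gt (x ⊔ a) (y ⊓ b) with h | h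
  · refine (hν _ ⟨le_sup_right, h.trans inf_le_right⟩ _
      ⟨le_sup_right.trans h, inf_le_right⟩ h).trans ?_
    exact ENNReal.coe_le_coe.2 (hω (Real.toNNReal_le_toNNReal (sub_le_sub inf_le_left le_sup_left)))
  · rw [Icc_eq_empty h.not_ge, tvar_empty]
    exact zero_le

theorem HasVariationModulus.norm_apply_Icc_le {ω : ℝ≥0 → ℝ≥0} (h : HasVariationModulus ν ω)
    (x y : ℝ) : ‖ν (Icc x y)‖ ≤ ω (y - x).toNNReal := by
  exact_mod_cast (nnnorm_le_tvar ν measurableSet_Icc subset_rfl).trans (h x y)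

end TotalVariation

section ScalarComponent

variable {H : Type*} [NormedAddCommGroup H] [InnerProductSpace ℝ H] (ν : VectorMeasure ℝ H)

theorem scalarComp_apply (ψ : H) (A : Set ℝ) : scalarComp ν ψ A = inner ℝ ψ (ν A) :=
  VectorMeasure.mapRange_apply ν (innerSL ℝ ψ).continuous

theorem scalarComp_zero : scalarComp ν 0 = 0 :=
  VectorMeasure.ext fun A _ => by simp [scalarComp_apply]

theorem scalarComp_add (ψ₁ ψ₂ : H) :
    scalarComp ν (ψ₁ + ψ₂) = scalarComp ν ψ₁ + scalarComp ν ψ₂ :=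
  VectorMeasure.ext fun A _ => by simp [scalarComp_apply, inner_add_left]

theorem scalarComp_smul (c : ℝ) (ψ : H) : scalarComp ν (c • ψ) = c • scalarComp ν ψ :=
  VectorMeasure.ext fun A _ => by simp [scalarComp_apply, real_inner_smul_left]

/-- On a Hahn decomposition `ℝ = i ∪ iᶜ` of `⟪ψ, ν(·)⟫`, `|⟪ψ, ν(·)⟫|(A)` is
`⟪ψ, ν(A ∩ i)⟫ - ⟪ψ, ν(A ∩ iᶜ)⟫`, and `{A ∩ i, A ∩ iᶜ}` is a partition of `A`. -/
theorem totalVariation_scalarComp_le (ψ : H) {A : Set ℝ} (hA : MeasurableSet A) :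
    (scalarComp ν ψ).totalVariation A ≤ ‖ψ‖₊ * tvar ν A := by
  set s := scalarComp ν ψ
  obtain ⟨i, hi, hpos, hneg, hp, hq⟩ := s.toJordanDecomposition_spec
  have hs : ∀ B, |s B| ≤ ‖ψ‖ * ‖ν B‖ := fun B => by
    rw [scalarComp_apply]; exact abs_real_inner_le_norm ψ (ν B)
  rw [SignedMeasure.totalVariation, Measure.add_apply, hp, hq,
    SignedMeasure.toMeasureOfZeroLE_apply _ hpos hi hA,
    SignedMeasure.toMeasureOfLEZero_apply _ hneg hi.compl hA]
  calc _ ≤ (‖ψ‖₊ * ‖ν (i ∩ A)‖₊ : ℝ≥0∞) + ‖ψ‖₊ * ‖ν (iᶜ ∩ A)‖₊ := by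
        gcongr <;> rw [← ENNReal.coe_mul, ENNReal.coe_le_coe, ← NNReal.coe_le_coe] <;> push_cast
        · exact (le_abs_self _).trans (hs _)
        · exact (neg_le_abs _).trans (hs _)
    _ = ‖ψ‖₊ * ((‖ν (i ∩ A)‖₊ : ℝ≥0∞) + ‖ν (iᶜ ∩ A)‖₊) := by ring
    _ ≤ ‖ψ‖₊ * tvar ν A := by
        gcongr
        exact nnnorm_add_nnnorm_le_tvar ν (hi.inter hA) (hi.compl.inter hA)
          (disjoint_compl_right.mono inter_subset_left inter_subset_left)
          inter_subset_right inter_subset_right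

theorem HasVariationModulus.measureReal_totalVariation_Icc_le {ν : VectorMeasure ℝ H}
    {ω : ℝ≥0 → ℝ≥0} (h : HasVariationModulus ν ω) (ψ : H) (x y : ℝ) :
    (scalarComp ν ψ).totalVariation.real (Icc x y) ≤ ‖ψ‖ * ω (y - x).toNNReal := by
  have := ENNReal.toReal_mono (by finiteness)
    ((totalVariation_scalarComp_le ν ψ measurableSet_Icc).trans (mul_le_mul_right (h x y) _))
  simpa [Measure.real] using this

end ScalarComponent

section SignedIntegral

theorem MeasureTheory.SignedMeasure.apply_eq_measureReal_sub (s : SignedMeasure ℝ) {A : Set ℝ}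
    (hA : MeasurableSet A) :
    s A = s.toJordanDecomposition.posPart.real A - s.toJordanDecomposition.negPart.real A := by
  conv_lhs => rw [← s.toSignedMeasure_toJordanDecomposition]
  exact Measure.toSignedMeasure_sub_apply hA

theorem sintegral_eq_integral_sub_integral {s : SignedMeasure ℝ} {ν₁ ν₂ : Measure ℝ}
    [IsFiniteMeasure ν₁] [IsFiniteMeasure ν₂] (h : s = ν₁.toSignedMeasure - ν₂.toSignedMeasure)
    (φ : ℝ →ᵇ ℝ) : sintegral s φ = ∫ t, φ t ∂ν₁ - ∫ t, φ t ∂ν₂ := by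
  set p := s.toJordanDecomposition.posPart
  set q := s.toJordanDecomposition.negPart
  have hpq : p + ν₂ = ν₁ + q := by
    rw [← Measure.toSignedMeasure_eq_toSignedMeasure_iff, Measure.toSignedMeasure_add,
      Measure.toSignedMeasure_add, ← sub_eq_sub_iff_add_eq_add, ← h]
    exact s.toSignedMeasure_toJordanDecomposition
  have := congrArg (fun m => ∫ t, φ t ∂m) hpq
  simp only [integral_add_measure (φ.integrable _) (φ.integrable _)] at this
  rw [sintegral]
  linarith

theorem sintegral_zero (φ : ℝ → ℝ) : sintegral 0 φ = 0 := by
  simp [sintegral, SignedMeasure.toJordanDecomposition_zero]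

theorem sintegral_add (s t : SignedMeasure ℝ) (φ : ℝ →ᵇ ℝ) :
    sintegral (s + t) φ = sintegral s φ + sintegral t φ := by
  rw [sintegral_eq_integral_sub_integral (ν₁ := s.toJordanDecomposition.posPart +
      t.toJordanDecomposition.posPart) (ν₂ := s.toJordanDecomposition.negPart +
      t.toJordanDecomposition.negPart),
    integral_add_measure (φ.integrable _) (φ.integrable _),
    integral_add_measure (φ.integrable _) (φ.integrable _), sintegral, sintegral]
  · ring
  · rw [Measure.toSignedMeasure_add, Measure.toSignedMeasure_add]
    conv_lhs => rw [← s.toSignedMeasure_toJordanDecomposition,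
      ← t.toSignedMeasure_toJordanDecomposition]
    simp only [JordanDecomposition.toSignedMeasure]
    abel

/-- Write `c = c⁺ - c⁻`; then `c • (p - q) = (c⁺ p + c⁻ q) - (c⁺ q + c⁻ p)`. -/
theorem sintegral_smul (c : ℝ) (s : SignedMeasure ℝ) (φ : ℝ →ᵇ ℝ) :
    sintegral (c • s) φ = c * sintegral s φ := by
  set p := s.toJordanDecomposition.posPart
  set q := s.toJordanDecomposition.negPart
  have hc : (c.toNNReal : ℝ) - ((-c).toNNReal : ℝ) = c := by simp [Real.coe_toNNReal']
  set cp := c.toNNReal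
  set cn := (-c).toNNReal
  clear_value cp cn
  rw [sintegral_eq_integral_sub_integral (ν₁ := cp • p + cn • q) (ν₂ := cp • q + cn • p),
    integral_add_measure (φ.integrable _) (φ.integrable _),
    integral_add_measure (φ.integrable _) (φ.integrable _), integral_smul_nnreal_measure,
    integral_smul_nnreal_measure, integral_smul_nnreal_measure, integral_smul_nnreal_measure,
    sintegral, ← hc]
  · simp only [NNReal.smul_def, smul_eq_mul]
    ring
  · simp only [Measure.toSignedMeasure_add, Measure.toSignedMeasure_smul, NNReal.smul_def]
    conv_lhs => rw [← s.toSignedMeasure_toJordanDecomposition, ← hc]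
    simp only [JordanDecomposition.toSignedMeasure]
    module

theorem sintegral_const_mul (c : ℝ) (s : SignedMeasure ℝ) (φ : ℝ → ℝ) :
    sintegral s (fun t => c * φ t) = c * sintegral s φ := by
  simp only [sintegral, integral_const_mul]
  ring

theorem abs_integral_sub_measureReal_le {α : Type*} [MeasurableSpace α] (ν : Measure α)
    [IsFiniteMeasure ν] {φ : α → ℝ} (hφ : Integrable φ ν) {I K : Set α}
    (hI : MeasurableSet I) (hK : MeasurableSet K)
    (hφI : ∀ t, |φ t - I.indicator (fun _ => 1) t| ≤ K.indicator (fun _ => 1) t) :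
    |∫ t, φ t ∂ν - ν.real I| ≤ ν.real K := by
  have hInt : Integrable (I.indicator fun _ => (1 : ℝ)) ν := (integrable_const 1).indicator hI
  calc |∫ t, φ t ∂ν - ν.real I| = |∫ t, (φ t - I.indicator (fun _ => 1) t) ∂ν| := by
        rw [integral_sub hφ hInt, integral_indicator_const _ hI, smul_eq_mul, mul_one]
    _ ≤ ∫ t, |φ t - I.indicator (fun _ => 1) t| ∂ν := abs_integral_le_integral_abs
    _ ≤ ∫ t, K.indicator (fun _ => (1 : ℝ)) t ∂ν :=
        integral_mono (hφ.sub hInt).abs ((integrable_const 1).indicator hK) hφI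
    _ = ν.real K := by rw [integral_indicator_const _ hK, smul_eq_mul, mul_one]

theorem abs_sintegral_sub_apply_le (s : SignedMeasure ℝ) (φ : ℝ →ᵇ ℝ) {I K : Set ℝ}
    (hI : MeasurableSet I) (hK : MeasurableSet K)
    (hφI : ∀ t, |φ t - I.indicator (fun _ => 1) t| ≤ K.indicator (fun _ => 1) t) :
    |sintegral s φ - s I| ≤ s.totalVariation.real K := by
  rw [sintegral, s.apply_eq_measureReal_sub hI, SignedMeasure.totalVariation,
    measureReal_add_apply]
  set p := s.toJordanDecomposition.posPart
  set q := s.toJordanDecomposition.negPart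
  have hp := abs_integral_sub_measureReal_le p (φ.integrable p) hI hK hφI
  have hq := abs_integral_sub_measureReal_le q (φ.integrable q) hI hK hφI
  calc _ = |(∫ t, φ t ∂p - p.real I) - (∫ t, φ t ∂q - q.real I)| := by ring_nf
    _ ≤ _ := (abs_sub _ _).trans (add_le_add hp hq)

end SignedIntegral

section Approximation

theorem max_zero_min_one_mem_Icc (r : ℝ) : max 0 (min 1 r) ∈ Icc (0 : ℝ) 1 :=
  ⟨le_max_left _ _, max_le zero_le_one (min_le_left _ _)⟩

noncomputable def tent (x y δ : ℝ) : ℝ →ᵇ ℝ :=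
  .mkOfBound ⟨fun t => max 0 (min 1 (min ((t - x) / δ + 1) ((y - t) / δ + 1))), by fun_prop⟩ 1
    fun _ _ => Real.dist_le_of_mem_Icc_01 (max_zero_min_one_mem_Icc _) (max_zero_min_one_mem_Icc _)

theorem abs_tent_sub_indicator_le {x y δ : ℝ} (hδ : 0 < δ) (t : ℝ) :
    |tent x y δ t - (Icc x y).indicator (fun _ => 1) t|
      ≤ (Icc (x - δ) (y + δ) \ Icc x y).indicator (fun _ => 1) t := by
  have htent : tent x y δ t = max 0 (min 1 (min ((t - x) / δ + 1) ((y - t) / δ + 1))) := rfl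
  by_cases hI : t ∈ Icc x y
  · have h₁ : 0 ≤ (t - x) / δ := div_nonneg (sub_nonneg.2 hI.1) hδ.le
    have h₂ : 0 ≤ (y - t) / δ := div_nonneg (sub_nonneg.2 hI.2) hδ.le
    rw [htent, min_eq_left (le_min (by linarith) (by linarith)), indicator_of_mem hI]
    simpa using indicator_nonneg (fun _ _ => zero_le_one) t
  rw [indicator_of_notMem hI, sub_zero]
  by_cases hK : t ∈ Icc (x - δ) (y + δ)
  · rw [indicator_of_mem (Set.mem_sdiff _ |>.2 ⟨hK, hI⟩), abs_le]
    have hmem : tent x y δ t ∈ Icc 0 1 := htent ▸ max_zero_min_one_mem_Icc _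
    exact ⟨by linarith [hmem.1], hmem.2⟩
  have hneg : min ((t - x) / δ + 1) ((y - t) / δ + 1) ≤ 0 := by
    rcases not_and_or.1 hK with h | h
    · have : (t - x) / δ ≤ -1 := by rw [div_le_iff₀ hδ]; linarith
      exact (min_le_left _ _).trans (by linarith)
    · have : (y - t) / δ ≤ -1 := by rw [div_le_iff₀ hδ]; linarith
      exact (min_le_right _ _).trans (by linarith)
  rw [htent, max_eq_left ((min_le_right _ _).trans hneg)]
  simpa using indicator_nonneg (fun _ _ => zero_le_one) t

theorem tendsto_measureReal_Icc_sdiff_Icc (ν : Measure ℝ) [IsFiniteMeasure ν] (x y : ℝ) :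
    Tendsto (fun δ => ν.real (Icc (x - δ) (y + δ) \ Icc x y)) (𝓝[>] 0) (𝓝 0) := by
  have hmono := tendsto_measure_biInter_gt (μ := ν) (a := 0)
    (s := fun δ => Icc (x - δ) (y + δ) \ Icc x y)
    (fun _ _ => (measurableSet_Icc.diff measurableSet_Icc).nullMeasurableSet)
    (fun _ _ _ hδ => sdiff_subset_sdiff_left (Icc_subset_Icc (by linarith) (by linarith)))
    ⟨1, one_pos, measure_ne_top _ _⟩
  have hempty : ⋂ δ > (0 : ℝ), Icc (x - δ) (y + δ) \ Icc x y = ∅ := by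
    refine eq_empty_iff_forall_notMem.2 fun t ht => ?_
    simp only [mem_iInter₂, Set.mem_sdiff] at ht
    exact (ht 1 one_pos).2 ⟨le_of_forall_pos_le_add fun δ hδ => by linarith [(ht δ hδ).1.1],
      le_of_forall_pos_le_add fun δ hδ => (ht δ hδ).1.2⟩
  rw [hempty, measure_empty] at hmono
  simpa [Function.comp_def, measureReal_def] using
    (ENNReal.tendsto_toReal ENNReal.zero_ne_top).comp hmono

/-- Testing against `tent x y δ` recovers `s [x, y]` up to `|s|([x - δ, y + δ] \ [x, y])`:
this is small for the limit by continuity from above, and for the sequence by hypothesis. -/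
theorem tendsto_apply_Icc_of_tendsto_sintegral {s : ℕ → SignedMeasure ℝ} {s₀ : SignedMeasure ℝ}
    (hs : ∀ φ : ℝ →ᵇ ℝ, Tendsto (fun n => sintegral (s n) φ) atTop (𝓝 (sintegral s₀ φ)))
    {x y : ℝ} {ρ : ℝ → ℝ} (hρ : Tendsto ρ (𝓝[>] 0) (𝓝 0))
    (hsρ : ∀ n, ∀ δ > 0, (s n).totalVariation.real (Icc (x - δ) (y + δ) \ Icc x y) ≤ ρ δ) :
    Tendsto (fun n => s n (Icc x y)) atTop (𝓝 (s₀ (Icc x y))) := by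
  rw [Metric.tendsto_atTop]
  intro ε hε
  obtain ⟨δ, ⟨hρδ, hs₀δ⟩, hδ⟩ := ((hρ.eventually (gt_mem_nhds (by positivity : 0 < ε / 3))).and
    ((tendsto_measureReal_Icc_sdiff_Icc s₀.totalVariation x y).eventually
      (gt_mem_nhds (by positivity : 0 < ε / 3))) |>.and self_mem_nhdsWithin).exists
  obtain ⟨N, hN⟩ := Metric.tendsto_atTop.1 (hs (tent x y δ)) (ε / 3) (by positivity)
  have happrox (r : SignedMeasure ℝ) :
      |sintegral r (tent x y δ) - r (Icc x y)|
        ≤ r.totalVariation.real (Icc (x - δ) (y + δ) \ Icc x y) :=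
    abs_sintegral_sub_apply_le r _ measurableSet_Icc (measurableSet_Icc.diff measurableSet_Icc)
      (abs_tent_sub_indicator_le hδ)
  refine ⟨N, fun n hn => ?_⟩
  calc dist (s n (Icc x y)) (s₀ (Icc x y))
      ≤ dist (s n (Icc x y)) (sintegral (s n) (tent x y δ))
        + dist (sintegral (s n) (tent x y δ)) (sintegral s₀ (tent x y δ))
        + dist (sintegral s₀ (tent x y δ)) (s₀ (Icc x y)) := dist_triangle4 _ _ _ _
    _ < ε / 3 + ε / 3 + ε / 3 := by
        rw [dist_comm, Real.dist_eq, Real.dist_eq]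
        gcongr
        · exact ((happrox _).trans (hsρ n δ hδ)).trans_lt hρδ
        · exact hN n hn
        · exact (happrox _).trans_lt hs₀δ
    _ = ε := by ring

end Approximation

section HilbertBasisPairing

variable {H : Type*} [NormedAddCommGroup H] [InnerProductSpace ℝ H]

theorem hasSum_inner_mul_sintegral_scalarComp {ι : Type*} (b : HilbertBasis ι ℝ H)
    (ν : VectorMeasure ℝ H) (φ : ℝ →ᵇ ℝ) {ψ : H} (hψ : ψ ∈ Submodule.span ℝ (range b)) :
    HasSum (fun i => inner ℝ ψ (b i) * sintegral (scalarComp ν (b i)) φ)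
      (sintegral (scalarComp ν ψ) φ) := by
  classical
  induction hψ using Submodule.span_induction with
  | mem _ h =>
    obtain ⟨j, rfl⟩ := h
    convert hasSum_ite_eq j (sintegral (scalarComp ν (b j)) φ) using 2 with i
    rcases eq_or_ne i j with rfl | hij
    · simp [b.orthonormal.1 i]
    · simp [hij, b.orthonormal.inner_eq_zero hij.symm]
  | zero => simp [scalarComp_zero, sintegral_zero, hasSum_zero]
  | add _ _ _ _ h₁ h₂ =>
    simpa [scalarComp_add, sintegral_add, inner_add_left, add_mul] using h₁.add h₂
  | smul c _ _ h =>
    simpa [scalarComp_smul, sintegral_smul, real_inner_smul_left, mul_assoc] using h.mul_left c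

theorem vpair_smul_const (b : HilbertBasis ℕ ℝ H) (ν : VectorMeasure ℝ H) (φ : ℝ →ᵇ ℝ) {ψ : H}
    (hψ : ψ ∈ Submodule.span ℝ (range b)) :
    vpair b ν (fun t => φ t • ψ) = sintegral (scalarComp ν ψ) φ := by
  simp_rw [vpair, real_inner_smul_left, mul_comm (φ _), sintegral_const_mul]
  exact (hasSum_inner_mul_sintegral_scalarComp b ν φ hψ).tsum_eq

end HilbertBasisPairing

section WeakConvergence

variable {H : Type*} [NormedAddCommGroup H] [InnerProductSpace ℝ H]

theorem tendsto_inner_of_dense {v : ℕ → H} {w : H} {C : ℝ} (hv : ∀ n, ‖v n‖ ≤ C) {S : Set H}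
    (hS : Dense S) (hvw : ∀ ψ ∈ S, Tendsto (fun n => inner ℝ (v n) ψ) atTop (𝓝 (inner ℝ w ψ)))
    (ψ : H) : Tendsto (fun n => inner ℝ (v n) ψ) atTop (𝓝 (inner ℝ w ψ)) := by
  have hequi : Equicontinuous fun n (ψ : H) => inner ℝ (v n) ψ := by
    refine Metric.equicontinuous_of_continuity_modulus (fun r => C * r)
      (by simpa using (continuous_const_mul C).tendsto 0) _ fun ψ₁ ψ₂ n => ?_
    rw [Real.dist_eq, ← inner_sub_right, dist_eq_norm]
    exact (abs_real_inner_le_norm _ _).trans (mul_le_mul_of_nonneg_right (hv n) (norm_nonneg _))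
  exact (hequi ψ).tendsto_of_mem_closure ((continuous_const.inner continuous_id).continuousWithinAt)
    hvw (hS ψ)

theorem norm_le_of_tendsto_inner {v : ℕ → H} {w : H} {C : ℝ} (hv : ∀ n, ‖v n‖ ≤ C)
    (hvw : Tendsto (fun n => inner ℝ (v n) w) atTop (𝓝 (inner ℝ w w))) : ‖w‖ ≤ C := by
  have hC : 0 ≤ C := (norm_nonneg _).trans (hv 0)
  have hw : ‖w‖ * ‖w‖ ≤ C * ‖w‖ := by
    rw [← real_inner_self_eq_norm_mul_norm]
    exact le_of_tendsto' hvw fun n =>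
      (real_inner_le_norm _ _).trans (mul_le_mul_of_nonneg_right (hv n) (norm_nonneg _))
  rcases (norm_nonneg w).eq_or_lt with h | h
  · rw [← h]; exact hC
  · exact le_of_mul_le_mul_right hw h

end WeakConvergence

theorem Metric.equicontinuousOn_of_continuity_modulus {ι X α : Type*} [PseudoMetricSpace X]
    [PseudoMetricSpace α] {F : ι → X → α} {K : Set X} (ρ : ℝ → ℝ) (hρ : Tendsto ρ (𝓝 0) (𝓝 0))
    (hF : ∀ x ∈ K, ∀ y ∈ K, ∀ i, dist (F i x) (F i y) ≤ ρ (dist x y)) :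
    EquicontinuousOn F K :=
  (equicontinuous_restrict_iff F).1 <| Metric.equicontinuous_of_continuity_modulus ρ hρ _
    fun x y i => hF x x.2 y y.2 i

theorem EquicontinuousOn.tendstoUniformlyOn_of_tendsto {ι X α : Type*} [TopologicalSpace X]
    [UniformSpace α] {F : ι → X → α} {f : X → α} {K : Set X} {l : Filter ι} (hK : IsCompact K)
    (hF : EquicontinuousOn F K) (hFf : ∀ x ∈ K, Tendsto (F · x) l (𝓝 (f x))) :
    TendstoUniformlyOn F f l K := by
  have h := (EquicontinuousOn.tendsto_uniformOnFun_iff_pi' (𝔖 := {K}) (by simpa) (by simpa) l f).2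
    (tendsto_pi_nhds.2 fun x => hFf x (by simpa using x.2))
  exact UniformOnFun.tendsto_iff_tendstoUniformlyOn.1 h K rfl

theorem tendsto_modulus_nhds_zero {ω : ℝ≥0 → ℝ≥0} (hωc : Continuous ω) (hω0 : ω 0 = 0) :
    Tendsto (fun r : ℝ => (ω r.toNNReal : ℝ)) (𝓝 0) (𝓝 0) := by
  simpa [Function.comp_def, hω0] using
    (NNReal.continuous_coe.comp (hωc.comp continuous_real_toNNReal)).tendsto (0 : ℝ)

section DistributionFunction

variable {H : Type*} [NormedAddCommGroup H] {ν : VectorMeasure ℝ H} {ω : ℝ≥0 → ℝ≥0}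

theorem apply_singleton_eq_zero (hν : ∀ x y, ‖ν (Icc x y)‖ ≤ ω (y - x).toNNReal)
    (hω0 : ω 0 = 0) (t : ℝ) : ν {t} = 0 := by
  simpa [hω0] using hν t t

theorem apply_Ico_eq_apply_Icc {x y : ℝ} (hxy : x ≤ y) (hy : ν {y} = 0) :
    ν (Ico x y) = ν (Icc x y) := by
  rw [← Icc_sdiff_right, VectorMeasure.of_sdiff (measurableSet_singleton y) measurableSet_Icc
    (singleton_subset_iff.2 (right_mem_Icc.2 hxy)), hy, sub_zero]

theorem norm_apply_Ico_sub_apply_Ico_le (hν : ∀ x y, ‖ν (Icc x y)‖ ≤ ω (y - x).toNNReal)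
    (hω0 : ω 0 = 0) {a x y : ℝ} (hax : a ≤ x) (hxy : x ≤ y) :
    ‖ν (Ico a y) - ν (Ico a x)‖ ≤ ω (y - x).toNNReal := by
  rw [← VectorMeasure.of_sdiff measurableSet_Ico measurableSet_Ico (Ico_subset_Ico_right hxy),
    show Ico a y \ Ico a x = Ico x y by grind,
    apply_Ico_eq_apply_Icc hxy (apply_singleton_eq_zero hν hω0 y)]
  exact hν x y

theorem dist_inner_apply_Ico_le [InnerProductSpace ℝ H]
    (hν : ∀ x y, ‖ν (Icc x y)‖ ≤ ω (y - x).toNNReal)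
    (hω0 : ω 0 = 0) (ψ : H) {a x y : ℝ} (hax : a ≤ x) (hay : a ≤ y) :
    dist (inner ℝ (ν (Ico a x)) ψ) (inner ℝ (ν (Ico a y)) ψ) ≤ ‖ψ‖ * ω (dist x y).toNNReal := by
  wlog hxy : x ≤ y generalizing x y
  · rw [dist_comm, dist_comm x]
    exact this hay hax (le_of_not_ge hxy)
  rw [dist_comm, Real.dist_eq, ← inner_sub_left, Real.dist_eq, abs_sub_comm, abs_of_nonneg
    (sub_nonneg.2 hxy), mul_comm]
  exact (abs_real_inner_le_norm _ _).trans
    (mul_le_mul_of_nonneg_right (norm_apply_Ico_sub_apply_Ico_le hν hω0 hax hxy) (norm_nonneg _))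

end DistributionFunction

theorem tendsto_inner_apply_Icc {H : Type*} [NormedAddCommGroup H] [InnerProductSpace ℝ H]
    (b : HilbertBasis ℕ ℝ H) {ω : ℝ≥0 → ℝ≥0} (hωc : Continuous ω) (hω0 : ω 0 = 0)
    {μn : ℕ → VectorMeasure ℝ H} {μ : VectorMeasure ℝ H} (hμn : ∀ n, HasVariationModulus (μn n) ω)
    (hconv : ∀ f : ℝ → H, Continuous f →
      Tendsto (fun n => vpair b (μn n) f) atTop (𝓝 (vpair b μ f)))
    (x y : ℝ) (ψ : H) :
    Tendsto (fun n => inner ℝ (μn n (Icc x y)) ψ) atTop (𝓝 (inner ℝ (μ (Icc x y)) ψ)) := by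
  refine tendsto_inner_of_dense (fun n => (hμn n).norm_apply_Icc_le x y)
    (Submodule.dense_iff_topologicalClosure_eq_top.2 b.dense_span) (fun ψ hψ => ?_) ψ
  simp_rw [real_inner_comm ψ, ← scalarComp_apply]
  refine tendsto_apply_Icc_of_tendsto_sintegral (fun φ => ?_)
    (ρ := fun δ => ‖ψ‖ * ω δ.toNNReal + ‖ψ‖ * ω δ.toNNReal) ?_ fun n δ _ => ?_
  · simpa only [vpair_smul_const b _ φ hψ] using
      hconv (fun t => φ t • ψ) (φ.continuous.smul continuous_const)
  · simpa using (((tendsto_modulus_nhds_zero hωc hω0).const_mul ‖ψ‖).add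
      ((tendsto_modulus_nhds_zero hωc hω0).const_mul ‖ψ‖)).mono_left nhdsWithin_le_nhds
  · have hsub : Icc (x - δ) (y + δ) \ Icc x y ⊆ Icc (x - δ) x ∪ Icc y (y + δ) := by
      intro t; simp only [Set.mem_sdiff, mem_Icc, mem_union]; grind
    calc _ ≤ _ := (measureReal_mono hsub).trans (measureReal_union_le _ _)
      _ ≤ _ := add_le_add ((hμn n).measureReal_totalVariation_Icc_le ψ _ _)
          ((hμn n).measureReal_totalVariation_Icc_le ψ _ _)
      _ = _ := by rw [sub_sub_cancel, add_sub_cancel_left]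

theorem uniformly_nonatomic_weak_star_limit_general
    {H : Type*} [NormedAddCommGroup H] [InnerProductSpace ℝ H]
    (bH : HilbertBasis ℕ ℝ H) (a b : ℝ)
    (ω : NNReal → NNReal) (hωm : Monotone ω) (hωc : Continuous ω) (hω0 : ω 0 = 0)
    (μn : ℕ → VectorMeasure ℝ H) (μ : VectorMeasure ℝ H)
    (hsupp : ∀ n, ∀ A : Set ℝ, MeasurableSet A → A ∩ Set.Icc a b = ∅ → μn n A = 0)
    (hna : ∀ n, ∀ x ∈ Set.Icc a b, ∀ y ∈ Set.Icc a b, x ≤ y →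
      tvar (μn n) (Set.Icc x y) ≤ (ω (Real.toNNReal (y - x)) : ℝ≥0∞))
    (hconv : ∀ f : ℝ → H, Continuous f →
      Tendsto (fun n => vpair bH (μn n) f) atTop (𝓝 (vpair bH μ f))) :
    (∀ t : ℝ, μ {t} = 0) ∧
    (∀ x ∈ Set.Icc a b, ∀ y ∈ Set.Icc a b, x ≤ y →
      ‖μ (Set.Ico a y) - μ (Set.Ico a x)‖₊ ≤ ω (Real.toNNReal (y - x))) ∧
    (∀ ψ : H, TendstoUniformlyOn
        (fun n t => (inner ℝ (μn n (Set.Ico a t)) ψ : ℝ))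
        (fun t => (inner ℝ (μ (Set.Ico a t)) ψ : ℝ)) atTop (Set.Icc a b)) := by
  have hμn (n : ℕ) : HasVariationModulus (μn n) ω := .of_support hωm (hsupp n) (hna n)
  have hweak := tendsto_inner_apply_Icc bH hωc hω0 hμn hconv
  have hμ (x y : ℝ) : ‖μ (Icc x y)‖ ≤ ω (y - x).toNNReal :=
    norm_le_of_tendsto_inner (fun n => (hμn n).norm_apply_Icc_le x y) (hweak x y _)
  refine ⟨apply_singleton_eq_zero hμ hω0, fun x hx y _ hxy => ?_, fun ψ => ?_⟩
  · exact_mod_cast norm_apply_Ico_sub_apply_Ico_le hμ hω0 hx.1 hxy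
  refine EquicontinuousOn.tendstoUniformlyOn_of_tendsto isCompact_Icc
    (Metric.equicontinuousOn_of_continuity_modulus (fun r => ‖ψ‖ * ω r.toNNReal)
      (by simpa using (tendsto_modulus_nhds_zero hωc hω0).const_mul ‖ψ‖)
      fun x hx y hy n => dist_inner_apply_Ico_le (hμn n).norm_apply_Icc_le hω0 ψ hx.1 hy.1)
    fun t ht => ?_
  rw [apply_Ico_eq_apply_Icc ht.1 (apply_singleton_eq_zero hμ hω0 t)]
  exact (hweak a t ψ).congr fun n => by
    rw [apply_Ico_eq_apply_Icc ht.1 (apply_singleton_eq_zero (hμn n).norm_apply_Icc_le hω0 t)]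

/-- Let `ω` be a monotone increasing continuous modulus with `ω(0) = 0`,
and let `μₙ → μ` weakly-star in `M(a,b;H)` with `|μₙ|([x,y]) ≤ ω(|x−y|)` for all `n` and all
`x ≤ y` in `[a,b]` (strong uniform non-atomicity). Then the limit measure `μ` is non-atomic,
its distribution function `Φ_μ(t) = μ([a,t))` satisfies `‖Φ_μ(y) − Φ_μ(x)‖ ≤ ω(|x−y|)`, and
for every `ψ ∈ H` the scalar distribution functions `t ↦ (Φ_{μₙ}(t), ψ)` converge to
`t ↦ (Φ_μ(t), ψ)` uniformly on `[a,b]`. -/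
theorem uniformly_nonatomic_weak_star_limit
    {H : Type*} [NormedAddCommGroup H] [InnerProductSpace ℝ H] [CompleteSpace H]
    (bH : HilbertBasis ℕ ℝ H) (a b : ℝ) (hab : a ≤ b)
    (ω : NNReal → NNReal) (hωm : Monotone ω) (hωc : Continuous ω) (hω0 : ω 0 = 0)
    (μn : ℕ → VectorMeasure ℝ H) (μ : VectorMeasure ℝ H)
    (hfinμ : tvar μ Set.univ ≠ ⊤)
    (hsupp : ∀ n, ∀ A : Set ℝ, MeasurableSet A → A ∩ Set.Icc a b = ∅ → μn n A = 0)
    (hsuppμ : ∀ A : Set ℝ, MeasurableSet A → A ∩ Set.Icc a b = ∅ → μ A = 0)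
    (hna : ∀ n, ∀ x ∈ Set.Icc a b, ∀ y ∈ Set.Icc a b, x ≤ y →
      tvar (μn n) (Set.Icc x y) ≤ (ω (Real.toNNReal (y - x)) : ℝ≥0∞))
    (hconv : ∀ f : ℝ → H, Continuous f →
      Tendsto (fun n => vpair bH (μn n) f) atTop (𝓝 (vpair bH μ f))) :
    (∀ t : ℝ, μ {t} = 0) ∧
    (∀ x ∈ Set.Icc a b, ∀ y ∈ Set.Icc a b, x ≤ y →
      ‖μ (Set.Ico a y) - μ (Set.Ico a x)‖₊ ≤ ω (Real.toNNReal (y - x))) ∧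
    (∀ ψ : H, TendstoUniformlyOn
        (fun n t => (inner ℝ (μn n (Set.Ico a t)) ψ : ℝ))
        (fun t => (inner ℝ (μ (Set.Ico a t)) ψ : ℝ)) atTop (Set.Icc a b)) :=
  uniformly_nonatomic_weak_star_limit_general bH a b ω hωm hωc hω0 μn μ hsupp hna hconv
end
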